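/- Let A be an algebraic curvature tensor on a nondegenerate inner product space V and T a self-adjoint linear map. The following are equivalent: (1) A(Tx,y,z,w) = A(x,Ty,z,w) = A(x,y,Tz,w) = A(x,y,z,Tw) for all x,y,z,w; (2) T commutes with every curvature operator R(x,y) (where <R(x,y)z,w> = A(x,y,z,w)); (3) T commutes with every Jacobi operator J(x) (where <J(x)y,z> = A(y,x,x,z)). -/

import Mathlib

/-!
Through `B`, `T` commutes with an operator built from one pair of slots of `A` exactly when `T`
can be moved across the other pair; so (2) says that `T` moves across the last pair of `A`.
A four-tensor whose two pairs are both symmetric or both antisymmetric and which satisfies the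
cyclic identity is pair symmetric; applied to `A(x, y, z, T w)` this spreads a move across the
last pair to all four slots, giving (1) ⇔ (2). For (3), polarizing the Jacobi condition moves `T`
across the last pair of `K(b, c, u, v) = A(u, b, c, v) + A(u, c, b, v)`, a tensor of the same kind
with symmetric pairs, and `K` recovers `A` by `3 A(x, y, z, w) = K(y, z, x, w) - K(x, z, y, w)`.
-/

section CyclicIdentity

variable {α : Type*} {f : α → α → α → α → ℝ} {ε : ℝ}

theorem pair_comm_of_cyclic (hε : ε * ε = 1)
    (h₁₂ : ∀ x y z w, f y x z w = ε * f x y z w) (h₃₄ : ∀ x y z w, f x y w z = ε * f x y z w)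
    (hcyc : ∀ x y z w, f x y z w + f y z x w + f z x y w = 0) (x y z w : α) :
    f x y z w = f z w x y := by
  -- the cyclic identities ending in `w` and in `z`, minus those ending in `y` and in `x`
  obtain rfl | rfl := mul_self_eq_one_iff.mp hε <;>
  linarith [hcyc x y z w, hcyc x y w z, hcyc x z w y, hcyc y z w x, h₁₂ x z y w, h₃₄ x y z w,
    h₁₂ x w y z, h₃₄ x z y w, h₁₂ x w z y, h₃₄ x w y z, h₃₄ y z x w, h₃₄ z w x y, h₁₂ y w z x,
    h₃₄ y w x z]

theorem apply_snd_eq_apply_fourth_of_cyclic (hε : ε * ε = 1)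
    (h₁₂ : ∀ x y z w, f y x z w = ε * f x y z w) (h₃₄ : ∀ x y z w, f x y w z = ε * f x y z w)
    (hcyc : ∀ x y z w, f x y z w + f y z x w + f z x y w = 0)
    {T : α → α} (hT : ∀ x y z w, f x y (T z) w = f x y z (T w)) (x y z w : α) :
    f x (T y) z w = f x y z (T w) := by
  have hTpair := pair_comm_of_cyclic (f := fun x y z w ↦ f x y z (T w)) hε
    (fun x y z w ↦ h₁₂ x y z (T w))
    (fun x y z w ↦ by rw [h₃₄, hT])
    (fun x y z w ↦ hcyc x y z (T w))
  rw [pair_comm_of_cyclic hε h₁₂ h₃₄ hcyc, hTpair]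

end CyclicIdentity

theorem LinearMap.IsSelfAdjoint.comp_comm_iff {R M : Type*} [CommRing R] [AddCommGroup M]
    [Module R M] {B : LinearMap.BilinForm R M} {T : M →ₗ[R] M} (hT : B.IsSelfAdjoint T)
    (hB : B.SeparatingLeft) (P : M →ₗ[R] M) :
    T ∘ₗ P = P ∘ₗ T ↔ ∀ u v, B (P (T u)) v = B (P u) (T v) := by
  have hBinj : Function.Injective B :=
    LinearMap.ker_eq_bot.mp (LinearMap.separatingLeft_iff_ker_eq_bot.mp hB)
  constructor
  · intro h u v
    rw [← hT, ← LinearMap.comp_apply T P, h, LinearMap.comp_apply]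
  · intro h
    ext u
    exact hBinj (LinearMap.ext fun v ↦ (hT _ _).trans (h u v).symm)

section AlgCurvatureTensor

variable {V : Type*} [AddCommGroup V] [Module ℝ V]

structure IsAlgCurvatureTensor (A : V →ₗ[ℝ] V →ₗ[ℝ] V →ₗ[ℝ] V →ₗ[ℝ] ℝ) : Prop where
  pair_comm : ∀ x y z w, A x y z w = A z w x y
  antisymm : ∀ x y z w, A x y z w = -A y x z w
  cyclic : ∀ x y z w, A x y z w + A y z x w + A z x y w = 0

-- `polarJacobi A b c u v = 2 ⟪J(b, c) u, v⟫`, with `J(b, c)` the polarization of `x ↦ J(x)`.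
def polarJacobi (A : V →ₗ[ℝ] V →ₗ[ℝ] V →ₗ[ℝ] V →ₗ[ℝ] ℝ) (b c u v : V) : ℝ :=
  A u b c v + A u c b v

theorem polarJacobi_apply_third_eq_apply_fourth {A : V →ₗ[ℝ] V →ₗ[ℝ] V →ₗ[ℝ] V →ₗ[ℝ] ℝ}
    {T : V → V} (hT : ∀ x u v, A (T u) x x v = A u x x (T v)) (b c u v : V) :
    polarJacobi A b c (T u) v = polarJacobi A b c u (T v) := by
  have h := hT (b + c) u v
  simp only [map_add, LinearMap.add_apply] at h
  simp only [polarJacobi]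
  linarith [hT b u v, hT c u v]

namespace IsAlgCurvatureTensor

variable {A : V →ₗ[ℝ] V →ₗ[ℝ] V →ₗ[ℝ] V →ₗ[ℝ] ℝ} (hA : IsAlgCurvatureTensor A) {T : V → V}
include hA

theorem antisymm_right (x y z w : V) : A x y z w = -A x y w z := by
  rw [hA.pair_comm, hA.antisymm, hA.pair_comm w]

theorem apply_reverse (x y z w : V) : A x y z w = A w z y x := by
  rw [hA.antisymm, hA.antisymm_right, neg_neg, hA.pair_comm]

theorem apply_snd_eq_apply_fourth (hT : ∀ x y z w, A x y (T z) w = A x y z (T w))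
    (x y z w : V) : A x (T y) z w = A x y z (T w) :=
  apply_snd_eq_apply_fourth_of_cyclic (f := fun x y z w ↦ A x y z w) (ε := -1) (by norm_num)
    (fun x y z w ↦ by rw [hA.antisymm]; ring) (fun x y z w ↦ by rw [hA.antisymm_right]; ring)
    hA.cyclic hT x y z w

theorem apply_first_eq_apply_snd (hT : ∀ x y z w, A x y (T z) w = A x y z (T w))
    (x y z w : V) : A (T x) y z w = A x (T y) z w := by
  rw [hA.pair_comm, hT, hA.pair_comm z]

theorem moves_all_slots_iff_moves_last_pair :
    (∀ x y z w, A (T x) y z w = A x (T y) z w ∧ A x (T y) z w = A x y (T z) w ∧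
        A x y (T z) w = A x y z (T w)) ↔
      ∀ x y z w, A x y (T z) w = A x y z (T w) := by
  refine ⟨fun h x y z w ↦ (h x y z w).2.2, fun hT x y z w ↦ ⟨?_, ?_, hT x y z w⟩⟩
  · exact hA.apply_first_eq_apply_snd hT x y z w
  · rw [hA.apply_snd_eq_apply_fourth hT, hT]

theorem polarJacobi_cyclic (b c u v : V) :
    polarJacobi A b c u v + polarJacobi A c u b v + polarJacobi A u b c v = 0 := by
  simp only [polarJacobi]
  linarith [hA.cyclic u b c v, hA.cyclic u c b v]

theorem three_mul_eq_polarJacobi_sub (x y z w : V) :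
    3 * A x y z w = polarJacobi A y z x w - polarJacobi A x z y w := by
  simp only [polarJacobi]
  linarith [hA.cyclic x y z w, hA.antisymm x z y w, hA.antisymm y x z w]

theorem apply_first_eq_apply_fourth_of_jacobi (hT : ∀ x u v, A (T u) x x v = A u x x (T v))
    (x y z w : V) : A (T x) y z w = A x y z (T w) := by
  have hK := apply_snd_eq_apply_fourth_of_cyclic (f := polarJacobi A) (ε := 1) (by norm_num)
    (fun b c u v ↦ by simp only [polarJacobi]; ring)
    (fun b c u v ↦ by simp only [polarJacobi]; rw [hA.apply_reverse v, hA.apply_reverse v]; ring)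
    hA.polarJacobi_cyclic (polarJacobi_apply_third_eq_apply_fourth hT)
  have hK₁ : polarJacobi A (T x) z y w = polarJacobi A x z y (T w) := by
    simp only [polarJacobi] at hK ⊢
    linarith [hK z x y w]
  have h := hA.three_mul_eq_polarJacobi_sub
  linarith [h (T x) y z w, h x y z (T w), polarJacobi_apply_third_eq_apply_fourth hT y z x w]

theorem moves_jacobi_iff_moves_last_pair :
    (∀ x u v, A (T u) x x v = A u x x (T v)) ↔ ∀ x y z w, A x y (T z) w = A x y z (T w) := by
  constructor
  · intro hT x y z w
    rw [hA.antisymm_right, ← hA.apply_first_eq_apply_fourth_of_jacobi hT, hA.antisymm_right,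
      hA.apply_first_eq_apply_fourth_of_jacobi hT, neg_neg]
  · intro hT x u v
    rw [hA.apply_first_eq_apply_snd hT, hA.apply_snd_eq_apply_fourth hT]

end IsAlgCurvatureTensor

end AlgCurvatureTensor

theorem stmt_2 {V : Type*} [AddCommGroup V] [Module ℝ V]
    (B : LinearMap.BilinForm ℝ V)
    (hBnd : B.Nondegenerate)
    (A : V →ₗ[ℝ] V →ₗ[ℝ] V →ₗ[ℝ] V →ₗ[ℝ] ℝ)
    (hpair : ∀ x y z w, A x y z w = A z w x y)
    (hanti : ∀ x y z w, A x y z w = -A y x z w)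
    (hbianchi : ∀ x y z w, A x y z w + A y z x w + A z x y w = 0)
    (Rop : V → V → V →ₗ[ℝ] V)
    (hRop : ∀ x y z w, B (Rop x y z) w = A x y z w)
    (Jop : V → V →ₗ[ℝ] V)
    (hJop : ∀ x y z, B (Jop x y) z = A y x x z)
    (T : V →ₗ[ℝ] V) (hT : ∀ x y, B (T x) y = B x (T y)) :
    ((∀ x y z w, A (T x) y z w = A x (T y) z w ∧ A x (T y) z w = A x y (T z) w ∧
        A x y (T z) w = A x y z (T w)) ↔
      (∀ x y, T ∘ₗ Rop x y = Rop x y ∘ₗ T)) ∧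
    ((∀ x y, T ∘ₗ Rop x y = Rop x y ∘ₗ T) ↔
      (∀ x, T ∘ₗ Jop x = Jop x ∘ₗ T)) := by
  have hA : IsAlgCurvatureTensor A := ⟨hpair, hanti, hbianchi⟩
  have hR : (∀ x y, T ∘ₗ Rop x y = Rop x y ∘ₗ T) ↔
      ∀ x y z w, A x y (T z) w = A x y z (T w) := by
    simp only [LinearMap.IsSelfAdjoint.comp_comm_iff hT hBnd.1, hRop]
  have hJ : (∀ x, T ∘ₗ Jop x = Jop x ∘ₗ T) ↔ ∀ x u v, A (T u) x x v = A u x x (T v) := by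
    simp only [LinearMap.IsSelfAdjoint.comp_comm_iff hT hBnd.1, hJop]
  rw [hR, hJ, hA.moves_all_slots_iff_moves_last_pair, hA.moves_jacobi_iff_moves_last_pair]
  exact ⟨.rfl, .rfl⟩
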